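/- arXiv:0803.1653 — 4 statements merged into one kernel-verified Lean document; each statement's English description precedes it below -/
import Mathlib

section
/- Let k ≥ 1 and let χ : (EuclideanSpace ℝ (Fin k)) × (EuclideanSpace ℝ (Fin k)) → ℝ be twice continuously differentiable, nonnegative, with the operator norm of its second derivative bounded by Ξ > 0 at every point, and such that for all ν, ζ, ξ the second derivative of ζ ↦ χ(ν,ζ) at ζ applied to (ξ,ξ) is at least γ‖ξ‖² for some γ > 0. Then there exists a constant Ξ₂ > 0 such that for all ν, ζ: (γ/4)‖ζ‖² − Ξ₂(1 + ‖ν‖²) ≤ χ(ν,ζ) ≤ Ξ₂(1 + ‖ν‖² + ‖ζ‖²). -/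
/-!
Since `‖D²χ‖ ≤ Ξ`, the derivative `Dχ` grows at most linearly and hence `χ` at most
quadratically. For the lower bound, expand `ζ ↦ χ (ν, ζ)` to second order at `ζ = 0`:
uniform convexity contributes `γ/2 ‖ζ‖²`, the constant term `χ (ν, 0)` is nonnegative, and the
linear term is at most `(‖Dχ 0‖ + Ξ ‖ν‖) ‖ζ‖`, which AM-GM absorbs into `γ/4 ‖ζ‖²` at the cost
of a multiple of `1 + ‖ν‖²`.
-/

open Set Metric

theorem add_deriv_add_half_le_of_le_deriv2 {φ φ' φ'' : ℝ → ℝ} {a : ℝ}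
    (hφ : ∀ t, HasDerivAt φ (φ' t) t) (hφ' : ∀ t, HasDerivAt φ' (φ'' t) t)
    (ha : ∀ t, a ≤ φ'' t) : φ 0 + φ' 0 + a / 2 ≤ φ 1 := by
  have hmono : Monotone fun t => φ' t - a * t :=
    monotone_of_hasDerivAt_nonneg
      (fun t => by simpa using (hφ' t).fun_sub ((hasDerivAt_id' t).const_mul a))
      fun t => sub_nonneg.2 (ha t)
  have hψ : ∀ t, HasDerivAt (fun t => φ t - a * t ^ 2 / 2) (φ' t - a * t) t := fun t =>
    ((hφ t).fun_sub (((hasDerivAt_pow 2 t).const_mul a).div_const 2)).congr_deriv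
      (by norm_num; ring)
  obtain ⟨ξ, hξ, hslope⟩ := exists_hasDerivAt_eq_slope _ _ zero_lt_one
    (fun t _ => (hψ t).continuousAt.continuousWithinAt) fun t _ => hψ t
  have hξ' : φ' 0 ≤ φ' ξ - a * ξ := by simpa using hmono hξ.1.le
  rw [hslope] at hξ'
  norm_num at hξ'
  linarith

theorem norm_prodMk_sq_le {E F : Type*} [Norm E] [Norm F] (x : E) (y : F) :
    ‖(x, y)‖ ^ 2 ≤ ‖x‖ ^ 2 + ‖y‖ ^ 2 := by
  rw [Prod.norm_def]
  rcases max_choice ‖x‖ ‖y‖ with h | h <;> rw [h] <;> nlinarith [sq_nonneg ‖x‖, sq_nonneg ‖y‖]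

variable {E F : Type*} [NormedAddCommGroup E] [NormedSpace ℝ E] [NormedAddCommGroup F] [NormedSpace ℝ F]

theorem ContDiff.add_fderiv_add_half_le {g : E → ℝ} (hg : ContDiff ℝ 2 g) (x h : E) {a : ℝ}
    (ha : ∀ t : ℝ, a ≤ iteratedFDeriv ℝ 2 g (x + t • h) ![h, h]) :
    g x + fderiv ℝ g x h + a / 2 ≤ g (x + h) := by
  have hline : ∀ t : ℝ, HasDerivAt (fun s : ℝ => x + s • h) h t := fun t => by
    simpa using ((hasDerivAt_id t).smul_const h).const_add x
  have hg' : Differentiable ℝ (fderiv ℝ g) :=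
    (hg.fderiv_right (m := 1) le_rfl).differentiable one_ne_zero
  have h1 : ∀ t : ℝ, HasDerivAt (fun s => g (x + s • h)) (fderiv ℝ g (x + t • h) h) t := fun t =>
    ((hg.differentiable two_ne_zero) _).hasFDerivAt.comp_hasDerivAt t (hline t)
  have h2 : ∀ t : ℝ, HasDerivAt (fun s => fderiv ℝ g (x + s • h) h)
      (fderiv ℝ (fderiv ℝ g) (x + t • h) h h) t := fun t =>
    (ContinuousLinearMap.apply ℝ ℝ h).hasFDerivAt.comp_hasDerivAt t
      ((hg' _).hasFDerivAt.comp_hasDerivAt t (hline t))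
  simpa using add_deriv_add_half_le_of_le_deriv2 h1 h2 fun t => by
    simpa [iteratedFDeriv_two_apply] using ha t

theorem norm_fderiv_fderiv_eq_norm_iteratedFDeriv_two (f : E → F) (x : E) :
    ‖fderiv ℝ (fderiv ℝ f) x‖ = ‖iteratedFDeriv ℝ 2 f x‖ := by
  rw [← norm_iteratedFDeriv_one, norm_iteratedFDeriv_fderiv]

theorem norm_le_norm_add_mul_of_norm_fderiv_le {f : E → F} {C : ℝ} (hf : Differentiable ℝ f)
    (hC : ∀ x, ‖fderiv ℝ f x‖ ≤ C) (x y : E) : ‖f y‖ ≤ ‖f x‖ + C * ‖y - x‖ := by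
  have := convex_univ.norm_image_sub_le_of_norm_fderiv_le (fun z _ => hf z) (fun z _ => hC z)
    (mem_univ x) (mem_univ y)
  linarith [norm_sub_norm_le (f y) (f x)]

theorem ContDiff.norm_fderiv_le_of_norm_iteratedFDeriv_two_le {f : E → F} {C : ℝ}
    (hf : ContDiff ℝ 2 f) (hC : ∀ x, ‖iteratedFDeriv ℝ 2 f x‖ ≤ C) (x : E) :
    ‖fderiv ℝ f x‖ ≤ ‖fderiv ℝ f 0‖ + C * ‖x‖ := by
  simpa using norm_le_norm_add_mul_of_norm_fderiv_le
    ((hf.fderiv_right (m := 1) le_rfl).differentiable one_ne_zero)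
    (fun z => (norm_fderiv_fderiv_eq_norm_iteratedFDeriv_two f z).trans_le (hC z)) 0 x

theorem ContDiff.norm_le_of_norm_iteratedFDeriv_two_le {f : E → F} {C : ℝ} (hf : ContDiff ℝ 2 f)
    (hC : ∀ x, ‖iteratedFDeriv ℝ 2 f x‖ ≤ C) (x : E) :
    ‖f x‖ ≤ (‖f 0‖ + ‖fderiv ℝ f 0‖ + C) * (1 + ‖x‖ ^ 2) := by
  have hC0 : 0 ≤ C := (norm_nonneg _).trans (hC 0)
  have hball : ∀ y ∈ closedBall (0 : E) ‖x‖, ‖fderiv ℝ f y‖ ≤ ‖fderiv ℝ f 0‖ + C * ‖x‖ := by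
    intro y hy
    have hy : ‖y‖ ≤ ‖x‖ := by simpa using hy
    exact (hf.norm_fderiv_le_of_norm_iteratedFDeriv_two_le hC y).trans (by gcongr)
  have hdiff := (convex_closedBall (0 : E) ‖x‖).norm_image_sub_le_of_norm_fderiv_le
    (fun y _ => hf.differentiable two_ne_zero y) hball (mem_closedBall_self (norm_nonneg x))
    (mem_closedBall_zero_iff.2 le_rfl)
  rw [sub_zero] at hdiff
  have hx : ‖x‖ ≤ 1 + ‖x‖ ^ 2 := by nlinarith [sq_nonneg (‖x‖ - 1)]
  nlinarith [norm_sub_norm_le (f x) (f 0), norm_nonneg (f 0), norm_nonneg (fderiv ℝ f 0),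
    mul_le_mul_of_nonneg_left hx (norm_nonneg (fderiv ℝ f 0))]

theorem norm_fderiv_apply_prodMk_le {G : Type*} [NormedAddCommGroup G] [NormedSpace ℝ G]
    {χ : E × F → G} {ν : E} {z : F} (h : DifferentiableAt ℝ χ (ν, z)) :
    ‖fderiv ℝ (fun w => χ (ν, w)) z‖ ≤ ‖fderiv ℝ χ (ν, z)‖ := by
  have hslice : HasFDerivAt (fun w => χ (ν, w)) ((fderiv ℝ χ (ν, z)).comp (.inr ℝ E F)) z :=
    h.hasFDerivAt.comp z (hasFDerivAt_prodMk_right ν z)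
  rw [hslice.fderiv]
  exact (ContinuousLinearMap.opNorm_comp_le _ _).trans
    (mul_le_of_le_one_right (norm_nonneg _) (ContinuousLinearMap.norm_inr_le_one ℝ E F))

theorem mul_le_div_four_mul_sq_add_sq_div {γ : ℝ} (hγ : 0 < γ) (b s : ℝ) :
    b * s ≤ γ / 4 * s ^ 2 + b ^ 2 / γ := by
  have h : γ / 4 * s ^ 2 + b ^ 2 / γ - b * s = (γ * s - 2 * b) ^ 2 / (4 * γ) := by
    field_simp
    ring
  linarith [show 0 ≤ (γ * s - 2 * b) ^ 2 / (4 * γ) by positivity]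

theorem quadratic_lower_bound_of_uniformlyConvex_snd {χ : E × F → ℝ} (hχ : ContDiff ℝ 2 χ)
    (hnonneg : ∀ ν, 0 ≤ χ (ν, 0)) {Ξ γ : ℝ} (hγ : 0 < γ)
    (hbound : ∀ p, ‖iteratedFDeriv ℝ 2 χ p‖ ≤ Ξ)
    (hconv : ∀ ν ζ ξ, γ * ‖ξ‖ ^ 2 ≤ iteratedFDeriv ℝ 2 (fun z => χ (ν, z)) ζ ![ξ, ξ]) (ν : E)
    (ζ : F) :
    γ / 4 * ‖ζ‖ ^ 2 - 2 * (‖fderiv ℝ χ 0‖ ^ 2 + Ξ ^ 2) / γ * (1 + ‖ν‖ ^ 2) ≤ χ (ν, ζ) := by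
  set b := ‖fderiv ℝ χ 0‖ + Ξ * ‖ν‖
  have hslice : ContDiff ℝ 2 fun z => χ (ν, z) := hχ.comp (contDiff_const.prodMk contDiff_id)
  have htaylor := hslice.add_fderiv_add_half_le 0 ζ fun t => hconv ν (0 + t • ζ) ζ
  simp only [zero_add] at htaylor
  have hslope : ‖fderiv ℝ (fun z => χ (ν, z)) 0‖ ≤ b :=
    (norm_fderiv_apply_prodMk_le (hχ.differentiable two_ne_zero _)).trans
      (by simpa using hχ.norm_fderiv_le_of_norm_iteratedFDeriv_two_le hbound (ν, 0))
  have hlin : -(b * ‖ζ‖) ≤ fderiv ℝ (fun z => χ (ν, z)) 0 ζ := by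
    refine neg_le_of_abs_le ((fderiv ℝ (fun z => χ (ν, z)) 0).le_opNorm ζ |>.trans ?_)
    gcongr
  have hb : b ^ 2 ≤ 2 * (‖fderiv ℝ χ 0‖ ^ 2 + Ξ ^ 2) * (1 + ‖ν‖ ^ 2) := by
    nlinarith [sq_nonneg (‖fderiv ℝ χ 0‖ - Ξ * ‖ν‖), sq_nonneg (‖fderiv ℝ χ 0‖ * ‖ν‖),
      sq_nonneg Ξ]
  have hamgm := mul_le_div_four_mul_sq_add_sq_div hγ b ‖ζ‖
  have hb' : b ^ 2 / γ ≤ 2 * (‖fderiv ℝ χ 0‖ ^ 2 + Ξ ^ 2) / γ * (1 + ‖ν‖ ^ 2) := by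
    rw [div_mul_eq_mul_div]
    gcongr
  linarith [hnonneg ν]

theorem quadratic_growth_kinetic_coenergy_general
    (k : ℕ)
    (χ : EuclideanSpace ℝ (Fin k) × EuclideanSpace ℝ (Fin k) → ℝ)
    (hχ : ContDiff ℝ 2 χ)
    (hnonneg : ∀ p, 0 ≤ χ p)
    (Ξ : ℝ)
    (hbound : ∀ p : EuclideanSpace ℝ (Fin k) × EuclideanSpace ℝ (Fin k),
      ‖iteratedFDeriv ℝ 2 χ p‖ ≤ Ξ)
    (γ : ℝ) (hγ : 0 < γ)
    (hconv : ∀ ν ζ ξ : EuclideanSpace ℝ (Fin k),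
      γ * ‖ξ‖ ^ 2 ≤ iteratedFDeriv ℝ 2 (fun z => χ (ν, z)) ζ ![ξ, ξ]) :
    ∃ Ξ₂ : ℝ, 0 < Ξ₂ ∧ ∀ ν ζ : EuclideanSpace ℝ (Fin k),
      γ / 4 * ‖ζ‖ ^ 2 - Ξ₂ * (1 + ‖ν‖ ^ 2) ≤ χ (ν, ζ) ∧
      χ (ν, ζ) ≤ Ξ₂ * (1 + ‖ν‖ ^ 2 + ‖ζ‖ ^ 2) := by
  set A := ‖χ 0‖ + ‖fderiv ℝ χ 0‖ + Ξ
  set K := 2 * (‖fderiv ℝ χ 0‖ ^ 2 + Ξ ^ 2) / γ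
  have hΞ : 0 ≤ Ξ := (norm_nonneg _).trans (hbound 0)
  have hA : 0 ≤ A := by positivity
  have hK : 0 ≤ K := by positivity
  refine ⟨1 + A + K, by positivity, fun ν ζ => ⟨?_, ?_⟩⟩
  · have hlower := quadratic_lower_bound_of_uniformlyConvex_snd hχ (fun _ => hnonneg _) hγ hbound hconv ν ζ
    nlinarith [sq_nonneg ‖ν‖]
  · calc χ (ν, ζ) ≤ ‖χ (ν, ζ)‖ := Real.le_norm_self _
      _ ≤ A * (1 + ‖(ν, ζ)‖ ^ 2) := hχ.norm_le_of_norm_iteratedFDeriv_two_le hbound _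
      _ ≤ (1 + A + K) * (1 + ‖ν‖ ^ 2 + ‖ζ‖ ^ 2) := by
        refine mul_le_mul (by linarith) ?_ (by positivity) (by positivity)
        linarith [norm_prodMk_sq_le ν ζ]

/-- Two-sided quadratic growth of the kinetic co-energy `χ` under the assumptions
(A4) (`χ ∈ C²`, `χ ≥ 0`, uniformly bounded second derivative) and (A5)
(uniform convexity in the second variable). -/
theorem quadratic_growth_kinetic_coenergy
    (k : ℕ) (hk : 1 ≤ k)
    (χ : EuclideanSpace ℝ (Fin k) × EuclideanSpace ℝ (Fin k) → ℝ)
    (hχ : ContDiff ℝ 2 χ)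
    (hnonneg : ∀ p, 0 ≤ χ p)
    (Ξ : ℝ) (hΞ : 0 < Ξ)
    (hbound : ∀ p : EuclideanSpace ℝ (Fin k) × EuclideanSpace ℝ (Fin k),
      ‖iteratedFDeriv ℝ 2 χ p‖ ≤ Ξ)
    (γ : ℝ) (hγ : 0 < γ)
    (hconv : ∀ ν ζ ξ : EuclideanSpace ℝ (Fin k),
      γ * ‖ξ‖ ^ 2 ≤ iteratedFDeriv ℝ 2 (fun z => χ (ν, z)) ζ ![ξ, ξ]) :
    ∃ Ξ₂ : ℝ, 0 < Ξ₂ ∧ ∀ ν ζ : EuclideanSpace ℝ (Fin k),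
      γ / 4 * ‖ζ‖ ^ 2 - Ξ₂ * (1 + ‖ν‖ ^ 2) ≤ χ (ν, ζ) ∧
      χ (ν, ζ) ≤ Ξ₂ * (1 + ‖ν‖ ^ 2 + ‖ζ‖ ^ 2) :=
  quadratic_growth_kinetic_coenergy_general k χ hχ hnonneg Ξ hbound γ hγ hconv
end

section
/- Let N ≥ 1, let t_0 < t_1 < ... < t_N be real numbers, let ν_i, φ_i ∈ EuclideanSpace ℝ (Fin k) for i = 0,…,N, and set Δ_i = t_i − t_{i-1}, ν̇_i = (ν_i − ν_{i-1})/Δ_i, φ̇_i = (φ_i − φ_{i-1})/Δ_i, and T = max_{1≤i≤N} Δ_i. Then |∑_{i=1}^{N} ⟪ν_i − ν_{i-1}, (φ_i + φ_{i-1})/2⟫ − ∑_{i=1}^{N} ⟪ν_i − ν_{i-1}, φ_{i-1}⟫| = (1/2)|∑_{i=1}^{N} Δ_i² ⟪ν̇_i, φ̇_i⟫| ≤ (T/2)·∑_{i=1}^{N} Δ_i‖ν̇_i‖‖φ̇_i‖. -/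
/-!
Writing `a = V i - V (i-1) = Δ i • ν̇ i` and `b = P i - P (i-1) = Δ i • φ̇ i`, each summand of the
difference is `⟪a, (P i + P (i-1))/2⟫ - ⟪a, P (i-1)⟫ = ⟪a, b⟫ / 2 = Δ i ^ 2 ⟪ν̇ i, φ̇ i⟫ / 2`.
The bound then follows from Cauchy–Schwarz and `Δ i ^ 2 ≤ T Δ i`, valid since `0 < Δ i ≤ T`.
-/

open scoped RealInnerProductSpace

section InnerProduct

variable {E : Type*} [NormedAddCommGroup E] [InnerProductSpace ℝ E]

theorem inner_midpoint_sub_inner_right (a p q : E) :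
    ⟪a, (2 : ℝ)⁻¹ • (p + q)⟫ - ⟪a, q⟫ = 2⁻¹ * ⟪a, p - q⟫ := by
  rw [real_inner_smul_right, inner_add_right, inner_sub_right]
  ring

theorem real_inner_eq_sq_mul_inner_inv_smul {d : ℝ} (hd : d ≠ 0) (a b : E) :
    ⟪a, b⟫ = d ^ 2 * ⟪d⁻¹ • a, d⁻¹ • b⟫ := by
  rw [real_inner_smul_left, real_inner_smul_right]
  field_simp

theorem abs_sq_mul_inner_le {d T : ℝ} (hd : 0 ≤ d) (hdT : d ≤ T) (x y : E) :
    |d ^ 2 * ⟪x, y⟫| ≤ T * (d * ‖x‖ * ‖y‖) := by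
  rw [abs_mul, abs_pow, abs_of_nonneg hd]
  calc d ^ 2 * |⟪x, y⟫| = d * (d * |⟪x, y⟫|) := by ring
    _ ≤ T * (d * (‖x‖ * ‖y‖)) := by
      gcongr
      · exact hd.trans hdT
      · exact abs_real_inner_le_norm x y
    _ = T * (d * ‖x‖ * ‖y‖) := by ring

theorem abs_sum_sq_mul_inner_le {ι : Type*} (s : Finset ι) (d : ι → ℝ) {T : ℝ}
    (hd : ∀ i ∈ s, 0 ≤ d i) (hdT : ∀ i ∈ s, d i ≤ T) (x y : ι → E) :
    |∑ i ∈ s, d i ^ 2 * ⟪x i, y i⟫| ≤ T * ∑ i ∈ s, d i * ‖x i‖ * ‖y i‖ := by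
  rw [Finset.mul_sum]
  exact (Finset.abs_sum_le_sum_abs _ _).trans
    (Finset.sum_le_sum fun i hi => abs_sq_mul_inner_le (hd i hi) (hdT i hi) _ _)

end InnerProduct

theorem sub_pred_pos_of_forall_lt_succ {N : ℕ} {t : ℕ → ℝ} (ht : ∀ i < N, t i < t (i + 1))
    {i : ℕ} (hi : i ∈ Finset.Icc 1 N) : 0 < t i - t (i - 1) := by
  obtain ⟨h1, h2⟩ := Finset.mem_Icc.1 hi
  have h := ht (i - 1) (by omega)
  rw [Nat.sub_add_cancel h1] at h
  linarith

/-- The difference between the midpoint form of the semi-discretized dissipation and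
the fully discretized dissipation is controlled by the maximal time step. -/
theorem dissipation_discretization_error
    (k N : ℕ) (hN : 1 ≤ N) (t : ℕ → ℝ)
    (ht : ∀ i < N, t i < t (i + 1))
    (V P : ℕ → EuclideanSpace ℝ (Fin k))
    (Δ : ℕ → ℝ) (hΔ : ∀ i, Δ i = t i - t (i - 1))
    (νdot φdot : ℕ → EuclideanSpace ℝ (Fin k))
    (hνdot : ∀ i, νdot i = (Δ i)⁻¹ • (V i - V (i - 1)))
    (hφdot : ∀ i, φdot i = (Δ i)⁻¹ • (P i - P (i - 1)))
    (T : ℝ) (hT : T = (Finset.Icc 1 N).sup' (Finset.nonempty_Icc.2 hN) Δ) :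
    |∑ i ∈ Finset.Icc 1 N, ⟪V i - V (i - 1), (2 : ℝ)⁻¹ • (P i + P (i - 1))⟫ -
        ∑ i ∈ Finset.Icc 1 N, ⟪V i - V (i - 1), P (i - 1)⟫| =
      2⁻¹ * |∑ i ∈ Finset.Icc 1 N, (Δ i) ^ 2 * ⟪νdot i, φdot i⟫| ∧
    2⁻¹ * |∑ i ∈ Finset.Icc 1 N, (Δ i) ^ 2 * ⟪νdot i, φdot i⟫| ≤
      T / 2 * ∑ i ∈ Finset.Icc 1 N, Δ i * ‖νdot i‖ * ‖φdot i‖ := by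
  have hΔpos : ∀ i ∈ Finset.Icc 1 N, 0 < Δ i := fun i hi =>
    hΔ i ▸ sub_pred_pos_of_forall_lt_succ ht hi
  have hdiff : ∑ i ∈ Finset.Icc 1 N, ⟪V i - V (i - 1), (2 : ℝ)⁻¹ • (P i + P (i - 1))⟫ -
        ∑ i ∈ Finset.Icc 1 N, ⟪V i - V (i - 1), P (i - 1)⟫ =
      2⁻¹ * ∑ i ∈ Finset.Icc 1 N, (Δ i) ^ 2 * ⟪νdot i, φdot i⟫ := by
    rw [← Finset.sum_sub_distrib, Finset.mul_sum]
    refine Finset.sum_congr rfl fun i hi => ?_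
    rw [inner_midpoint_sub_inner_right, hνdot, hφdot,
      ← real_inner_eq_sq_mul_inner_inv_smul (hΔpos i hi).ne']
  have hΔle : ∀ i ∈ Finset.Icc 1 N, Δ i ≤ T := fun i hi => hT ▸ Finset.le_sup' Δ hi
  refine ⟨by rw [hdiff, abs_mul, abs_of_pos (by norm_num : (0 : ℝ) < 2⁻¹)], ?_⟩
  have hbound := abs_sum_sq_mul_inner_le _ Δ (fun i hi => (hΔpos i hi).le) hΔle νdot φdot
  linarith
end

section
/- Let t_0 < t_f be real numbers, let 𝒯 be a nonempty finite index set, and for each K ∈ 𝒯 let Θ_K be a finite set of reals with {t_0, t_f} ⊆ Θ_K ⊆ [t_0, t_f] and #Θ_K ≥ 2. Let Θ = ⋃_{K∈𝒯} Θ_K. For a finite set S = {s_0 < s_1 < ... < s_M} ⊆ ℝ with M ≥ 1, write maxgap(S) = max_j (s_{j+1} − s_j) and mingap(S) = min_j (s_{j+1} − s_j). Set h_Θ = maxgap(Θ), T_Θ = max_{K∈𝒯} maxgap(Θ_K), and τ_Θ = T_Θ / (min_{K∈𝒯} mingap(Θ_K)). Then h_Θ ≤ T_Θ ≤ τ_Θ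 · h_Θ · (#𝒯). -/
/-- The list of gaps between consecutive elements of a finite set of reals. -/
noncomputable def gapList (S : Finset ℝ) : List ℝ :=
  List.zipWith (fun a b => b - a) (S.sort (· ≤ ·)) (S.sort (· ≤ ·)).tail

/-- The maximal gap between consecutive elements of a finite set of reals. -/
noncomputable def maxgap (S : Finset ℝ) : ℝ :=
  (gapList S).foldr max 0

/-- The minimal gap between consecutive elements of a finite set of reals
(for sets with at least two elements). -/
noncomputable def mingap (S : Finset ℝ) : ℝ :=
  (gapList S).foldr min (maxgap S)

/-!
Since `Θ` contains every `Θ_K` and all of them span `[t₀, t_f]`, each gap of `Θ` lies inside a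
gap of `Θ_K`, so `h_Θ ≤ T_Θ`. For the second inequality, the gaps of each of these sets add up to
`t_f - t₀`, whence `mingap Θ_K · (#Θ_K - 1) ≤ t_f - t₀ ≤ h_Θ · (#Θ - 1)`. As all `Θ_K` share `t₀`,
`#Θ - 1 ≤ #𝒯 · max_K (#Θ_K - 1)`; choosing `K` with the most points gives
`min_K mingap Θ_K ≤ h_Θ · #𝒯`, and multiplying by `T_Θ / min_K mingap Θ_K` concludes.
-/

open Finset

namespace List

variable {α : Type*}

section Fold

variable [LinearOrder α] {l : List α} {b c : α}

theorem foldr_max_le_iff : l.foldr max b ≤ c ↔ b ≤ c ∧ ∀ x ∈ l, x ≤ c := by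
  induction l with
  | nil => simp
  | cons y l ih => simp only [foldr_cons, max_le_iff, ih, forall_mem_cons]; tauto

theorem le_foldr_min_iff : c ≤ l.foldr min b ↔ c ≤ b ∧ ∀ x ∈ l, c ≤ x := by
  induction l with
  | nil => simp
  | cons y l ih => simp only [foldr_cons, le_min_iff, ih, forall_mem_cons]; tauto

theorem lt_foldr_min_iff : c < l.foldr min b ↔ c < b ∧ ∀ x ∈ l, c < x := by
  induction l with
  | nil => simp
  | cons y l ih => simp only [foldr_cons, lt_min_iff, ih, forall_mem_cons]; tauto

end Fold

theorem sum_zipWith_sub_tail [AddCommGroup α] : ∀ (l : List α) (h : l ≠ []),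
    (zipWith (fun a b => b - a) l l.tail).sum = l.getLast h - l.head h
  | [a], _ => by simp
  | a :: b :: l, _ => by
    have ih := sum_zipWith_sub_tail (b :: l) (cons_ne_nil b l)
    simp only [tail_cons] at ih
    simp only [tail_cons, zipWith_cons_cons, sum_cons, ih, getLast_cons_cons, head_cons]
    abel

theorem mem_zipWith_sub_tail_iff [Sub α] [LinearOrder α] {l : List α} (hl : l.SortedLT) {x : α} :
    x ∈ zipWith (fun a b => b - a) l l.tail ↔
      ∃ a ∈ l, ∃ b ∈ l, a < b ∧ (∀ c ∈ l, c ≤ a ∨ b ≤ c) ∧ x = b - a := by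
  constructor
  · intro hx
    obtain ⟨i, hi, rfl⟩ := mem_iff_getElem.1 hx
    simp only [length_zipWith, length_tail] at hi
    refine ⟨l[i], getElem_mem _, l[i + 1], getElem_mem _, hl.getElem_lt_getElem_iff.2 (by omega),
      fun c hc => ?_, by simp⟩
    obtain ⟨j, hj, rfl⟩ := getElem_of_mem hc
    simp only [hl.getElem_le_getElem_iff]
    omega
  · rintro ⟨_, ha, _, hb, hab, hadj, rfl⟩
    obtain ⟨i, hi, rfl⟩ := getElem_of_mem ha
    obtain ⟨j, hj, rfl⟩ := getElem_of_mem hb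
    have hij : i < j := hl.getElem_lt_getElem_iff.1 hab
    obtain rfl : j = i + 1 := by
      by_contra hne
      have := hadj l[i + 1] (getElem_mem _)
      simp only [hl.getElem_le_getElem_iff] at this
      omega
    exact mem_iff_getElem.2 ⟨i, by simp; omega, by simp⟩

end List

theorem Finset.card_sup_sub_one_le_card_mul {ι α : Type*} [DecidableEq α] {s : Finset ι}
    {Θ : ι → Finset α} {a : α} {n : ℕ} (ha : ∀ K ∈ s, a ∈ Θ K) (hn : ∀ K ∈ s, #(Θ K) - 1 ≤ n) :
    #(s.sup Θ) - 1 ≤ #s * n :=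
  calc #(s.sup Θ) - 1 ≤ #((s.sup Θ).erase a) := pred_card_le_card_erase
    _ ≤ #(s.biUnion fun K => (Θ K).erase a) := by
      refine card_le_card fun x hx => ?_
      simp only [mem_erase, sup_eq_biUnion, mem_biUnion] at hx ⊢
      tauto
    _ ≤ #s * n := card_biUnion_le_card_mul _ _ _ fun K hK => by
      rw [card_erase_of_mem (ha K hK)]
      exact hn K hK

theorem Finset.coe_sup_subset {ι α : Type*} [DecidableEq α] {s : Finset ι} {Θ : ι → Finset α}
    {t : Set α} (h : ∀ K ∈ s, (Θ K : Set α) ⊆ t) : ((s.sup Θ : Finset α) : Set α) ⊆ t :=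
  fun _ hx => (mem_sup.1 hx).elim fun K ⟨hK, hxK⟩ => h K hK hxK

section Gaps

variable {S T : Finset ℝ} {a b g : ℝ}

theorem length_gapList (S : Finset ℝ) : (gapList S).length = #S - 1 := by
  simp [gapList]

theorem mem_gapList_iff :
    g ∈ gapList S ↔ ∃ a ∈ S, ∃ b ∈ S, a < b ∧ (∀ c ∈ S, c ≤ a ∨ b ≤ c) ∧ g = b - a := by
  simp only [gapList, List.mem_zipWith_sub_tail_iff S.sortedLT_sort, mem_sort]

theorem pos_of_mem_gapList (hg : g ∈ gapList S) : 0 < g := by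
  obtain ⟨a, -, b, -, hab, -, rfl⟩ := mem_gapList_iff.1 hg
  exact sub_pos.2 hab

theorem sum_gapList_of_subset_Icc (hS : (S : Set ℝ) ⊆ Set.Icc a b) (ha : a ∈ S) (hb : b ∈ S) :
    (gapList S).sum = b - a := by
  have hne : S.Nonempty := ⟨a, ha⟩
  have hmin : S.min' hne = a := le_antisymm (min'_le S a ha) (hS (min'_mem S hne)).1
  have hmax : S.max' hne = b := le_antisymm (hS (max'_mem S hne)).2 (le_max' S b hb)
  have hsort : S.sort (· ≤ ·) ≠ [] := by simpa [← List.length_pos_iff] using hne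
  rw [gapList, List.sum_zipWith_sub_tail _ hsort, List.head_eq_getElem, List.getLast_eq_getElem,
    sorted_zero_eq_min', sorted_last_eq_max', hmin, hmax]

theorem le_maxgap (hg : g ∈ gapList S) : g ≤ maxgap S :=
  (List.foldr_max_le_iff.1 le_rfl).2 g hg

theorem maxgap_nonneg (S : Finset ℝ) : 0 ≤ maxgap S :=
  (List.foldr_max_le_iff.1 le_rfl).1

theorem maxgap_le {c : ℝ} (hc : 0 ≤ c) (h : ∀ g ∈ gapList S, g ≤ c) : maxgap S ≤ c :=
  List.foldr_max_le_iff.2 ⟨hc, h⟩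

theorem mingap_le (hg : g ∈ gapList S) : mingap S ≤ g :=
  (List.le_foldr_min_iff.1 le_rfl).2 g hg

theorem gapList_ne_nil (hS : 2 ≤ #S) : gapList S ≠ [] := by
  rw [← List.length_pos_iff, length_gapList]
  omega

theorem mingap_pos (hS : 2 ≤ #S) : 0 < mingap S := by
  obtain ⟨g, hg⟩ := List.exists_mem_of_ne_nil _ (gapList_ne_nil hS)
  exact List.lt_foldr_min_iff.2
    ⟨(pos_of_mem_gapList hg).trans_le (le_maxgap hg), fun _ => pos_of_mem_gapList⟩

theorem mingap_mul_card_sub_one_le (hS : (S : Set ℝ) ⊆ Set.Icc a b) (ha : a ∈ S) (hb : b ∈ S) :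
    mingap S * (#S - 1 : ℕ) ≤ b - a := by
  have := List.card_nsmul_le_sum (gapList S) (mingap S) fun _ => mingap_le
  rwa [sum_gapList_of_subset_Icc hS ha hb, length_gapList, nsmul_eq_mul, mul_comm] at this

theorem sub_le_maxgap_mul_card_sub_one (hS : (S : Set ℝ) ⊆ Set.Icc a b) (ha : a ∈ S) (hb : b ∈ S) :
    b - a ≤ maxgap S * (#S - 1 : ℕ) := by
  have := List.sum_le_card_nsmul (gapList S) (maxgap S) fun _ => le_maxgap
  rwa [sum_gapList_of_subset_Icc hS ha hb, length_gapList, nsmul_eq_mul, mul_comm] at this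

theorem maxgap_le_maxgap_of_subset (hST : S ⊆ T) (hT : (T : Set ℝ) ⊆ Set.Icc a b)
    (ha : a ∈ S) (hb : b ∈ S) : maxgap T ≤ maxgap S := by
  refine maxgap_le (maxgap_nonneg S) fun g hg => ?_
  obtain ⟨s, hs, t, ht, hst, hadj, rfl⟩ := mem_gapList_iff.1 hg
  have hbelow : (S.filter (· ≤ s)).Nonempty := ⟨a, mem_filter.2 ⟨ha, (hT hs).1⟩⟩
  have habove : (S.filter (t ≤ ·)).Nonempty := ⟨b, mem_filter.2 ⟨hb, (hT ht).2⟩⟩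
  obtain ⟨hcS, hcs⟩ := mem_filter.1 ((S.filter (· ≤ s)).max'_mem hbelow)
  obtain ⟨hdS, htd⟩ := mem_filter.1 ((S.filter (t ≤ ·)).min'_mem habove)
  set c := (S.filter (· ≤ s)).max' hbelow
  set d := (S.filter (t ≤ ·)).min' habove
  -- `c` and `d`, the points of `S` nearest to the gap `(s, t)` of `T`, are consecutive in `S`.
  have hcd : d - c ∈ gapList S := by
    refine mem_gapList_iff.2 ⟨c, hcS, d, hdS, by linarith, fun u hu => ?_, rfl⟩
    exact (hadj u (hST hu)).imp (fun h => le_max' _ u (mem_filter.2 ⟨hu, h⟩))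
      (fun h => min'_le _ u (mem_filter.2 ⟨hu, h⟩))
  linarith [le_maxgap hcd]

end Gaps

theorem inf'_mingap_le_maxgap_sup_mul_card {ι : Type*} [Fintype ι] [Nonempty ι]
    [DecidableEq ℝ] {a b : ℝ} {Θ : ι → Finset ℝ} (hsub : ∀ K, (Θ K : Set ℝ) ⊆ Set.Icc a b)
    (hmem : ∀ K, a ∈ Θ K ∧ b ∈ Θ K) (hcard : ∀ K, 2 ≤ #(Θ K)) :
    univ.inf' univ_nonempty (fun K => mingap (Θ K)) ≤ maxgap (univ.sup Θ) * Fintype.card ι := by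
  set Θall := univ.sup Θ
  have hΘall : ((Θall : Finset ℝ) : Set ℝ) ⊆ Set.Icc a b := coe_sup_subset fun K _ => hsub K
  obtain ⟨K₀, -, hK₀⟩ := exists_mem_eq_sup' univ_nonempty fun K => #(Θ K) - 1
  set N := #(Θ K₀) - 1
  have hN : ∀ K ∈ univ, #(Θ K) - 1 ≤ N := fun K hK => hK₀ ▸ le_sup' (fun K => #(Θ K) - 1) hK
  have hcount : #Θall - 1 ≤ Fintype.card ι * N :=
    card_sup_sub_one_le_card_mul (fun K _ => (hmem K).1) hN
  have hK₀Θall : Θ K₀ ⊆ Θall := le_sup (mem_univ K₀)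
  refine le_of_mul_le_mul_right ?_ (show (0 : ℝ) < N by have := hcard K₀; norm_cast; omega)
  calc univ.inf' univ_nonempty (fun K => mingap (Θ K)) * N ≤ mingap (Θ K₀) * N := by
        gcongr
        exact inf'_le _ (mem_univ K₀)
    _ ≤ b - a := mingap_mul_card_sub_one_le (hsub K₀) (hmem K₀).1 (hmem K₀).2
    _ ≤ maxgap Θall * (#Θall - 1 : ℕ) :=
        sub_le_maxgap_mul_card_sub_one hΘall (hK₀Θall (hmem K₀).1) (hK₀Θall (hmem K₀).2)
    _ ≤ maxgap Θall * (Fintype.card ι * N : ℕ) :=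
        mul_le_mul_of_nonneg_left (by exact_mod_cast hcount) (maxgap_nonneg _)
    _ = maxgap Θall * Fintype.card ι * N := by push_cast; ring

open scoped Classical in
theorem time_set_size_inequalities_general
    {ι : Type*} [Fintype ι] [Nonempty ι]
    (t0 tf : ℝ) (Θ : ι → Finset ℝ)
    (hsub : ∀ K, (Θ K : Set ℝ) ⊆ Set.Icc t0 tf)
    (hmem : ∀ K, t0 ∈ Θ K ∧ tf ∈ Θ K)
    (hcard : ∀ K, 2 ≤ (Θ K).card) :
    maxgap (Finset.univ.sup Θ) ≤
        Finset.univ.sup' Finset.univ_nonempty (fun K => maxgap (Θ K)) ∧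
      Finset.univ.sup' Finset.univ_nonempty (fun K => maxgap (Θ K)) ≤
        (Finset.univ.sup' Finset.univ_nonempty (fun K => maxgap (Θ K)) /
            Finset.univ.inf' Finset.univ_nonempty (fun K => mingap (Θ K))) *
          maxgap (Finset.univ.sup Θ) * (Fintype.card ι) := by
  obtain ⟨K, -, hK⟩ := exists_mem_eq_inf' univ_nonempty fun K => mingap (Θ K)
  set T := univ.sup' univ_nonempty fun K => maxgap (Θ K)
  set m := univ.inf' univ_nonempty fun K => mingap (Θ K)
  have hm : 0 < m := hK ▸ mingap_pos (hcard K)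
  have hT : 0 ≤ T := (maxgap_nonneg (Θ K)).trans (le_sup' (fun K => maxgap (Θ K)) (mem_univ K))
  refine ⟨?_, ?_⟩
  · calc maxgap (univ.sup Θ) ≤ maxgap (Θ K) :=
          maxgap_le_maxgap_of_subset (le_sup (mem_univ K)) (coe_sup_subset fun K _ => hsub K)
            (hmem K).1 (hmem K).2
      _ ≤ T := le_sup' (fun K => maxgap (Θ K)) (mem_univ K)
  · rw [mul_assoc, div_mul_eq_mul_div, le_div_iff₀ hm]
    exact mul_le_mul_of_nonneg_left (inf'_mingap_le_maxgap_sup_mul_card hsub hmem hcard) hT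

open scoped Classical in
/-- The relation `h_Θ ≤ T_Θ ≤ τ_Θ · h_Θ · #𝒯` between the size of the global time
set, the maximum of the elemental time sizes, and the asynchronicity ratio. -/
theorem time_set_size_inequalities
    {ι : Type*} [Fintype ι] [Nonempty ι]
    (t0 tf : ℝ) (h : t0 < tf) (Θ : ι → Finset ℝ)
    (hsub : ∀ K, (Θ K : Set ℝ) ⊆ Set.Icc t0 tf)
    (hmem : ∀ K, t0 ∈ Θ K ∧ tf ∈ Θ K)
    (hcard : ∀ K, 2 ≤ (Θ K).card) :
    maxgap (Finset.univ.sup Θ) ≤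
        Finset.univ.sup' Finset.univ_nonempty (fun K => maxgap (Θ K)) ∧
      Finset.univ.sup' Finset.univ_nonempty (fun K => maxgap (Θ K)) ≤
        (Finset.univ.sup' Finset.univ_nonempty (fun K => maxgap (Θ K)) /
            Finset.univ.inf' Finset.univ_nonempty (fun K => mingap (Θ K))) *
          maxgap (Finset.univ.sup Θ) * (Fintype.card ι) :=
  time_set_size_inequalities_general t0 tf Θ hsub hmem hcard
end

section
/- Let I = (a, b) ⊆ ℝ be a bounded open interval, n ≥ 1, C ≥ 0, and let (ε_h) be a sequence of nonnegative reals with ε_h → 0. Let f_h : I → EuclideanSpace ℝ (Fin n) be functions satisfying ‖f_h(t₂) − f_h(t₁)‖ ≤ C·(t₂ − t₁ + ε_h) for all t₁ ≤ t₂ in I and all h, and suppose f_h(t) → f(t) for almost every t ∈ I (with respect to Lebesgue measure). Then there exists a function g : I → EuclideanSpace ℝ (Fin n) which is Lipschitz with constant C and equals f almost everywhere on I. -/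
/-!
Passing to the limit in the increment bound shows that the a.e. limit is `C`-Lipschitz on the set
`E` of points of `(a, b)` where the sequence converges, since the defects `ε h` disappear. A set of
full measure in an open set is dense in it, so `(a, b) ⊆ closure E`. Finally, a Lipschitz map into
a finite-dimensional space extends to a continuous map, which stays `C`-Lipschitz on the closure.
-/

open MeasureTheory Set Filter Topology
open scoped NNReal

theorem LipschitzOnWith.of_tendsto_of_dist_le {ι α β : Type*} [PseudoMetricSpace α]
    [PseudoMetricSpace β] {l : Filter ι} [l.NeBot] {K : ℝ≥0} {s : Set α} {ε : ι → ℝ}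
    (hε : Tendsto ε l (𝓝 0)) {F : ι → α → β} {f : α → β}
    (hF : ∀ i, ∀ x ∈ s, ∀ y ∈ s, dist (F i x) (F i y) ≤ K * (dist x y + ε i))
    (hlim : ∀ x ∈ s, Tendsto (F · x) l (𝓝 (f x))) :
    LipschitzOnWith K f s := by
  refine LipschitzOnWith.of_dist_le_mul fun x hx y hy => ?_
  have hbound : Tendsto (fun i => (K : ℝ) * (dist x y + ε i)) l (𝓝 (K * dist x y)) := by
    simpa using (tendsto_const_nhds.add hε).const_mul (K : ℝ)
  exact le_of_tendsto_of_tendsto' ((hlim x hx).dist (hlim y hy)) hbound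
    fun i => hF i x hx y hy

theorem dist_le_mul_of_forall_le_norm_sub_le {E : Type*} [SeminormedAddCommGroup E]
    {s : Set ℝ} {F : ℝ → E} {C δ : ℝ}
    (hF : ∀ x ∈ s, ∀ y ∈ s, x ≤ y → ‖F y - F x‖ ≤ C * (y - x + δ)) :
    ∀ x ∈ s, ∀ y ∈ s, dist (F x) (F y) ≤ C * (dist x y + δ) := by
  intro x hx y hy
  rcases le_total x y with hxy | hyx
  · rw [dist_comm, dist_eq_norm, Real.dist_eq, abs_sub_comm, abs_of_nonneg (sub_nonneg.2 hxy)]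
    exact hF x hx y hy hxy
  · rw [dist_eq_norm, Real.dist_eq, abs_of_nonneg (sub_nonneg.2 hyx)]
    exact hF y hy x hx hyx

theorem subset_closure_setOf_of_ae_restrict {X : Type*} [TopologicalSpace X] [MeasurableSpace X]
    [OpensMeasurableSpace X] {μ : Measure X} [μ.IsOpenPosMeasure] {U : Set X} {p : X → Prop}
    (hU : IsOpen U) (hp : ∀ᵐ x ∂μ.restrict U, p x) :
    U ⊆ closure {x | x ∈ U ∧ p x} := by
  intro x hxU
  rw [mem_closure_iff]
  intro V hV hxV
  by_contra hempty
  have hnull : μ {x | ¬(x ∈ U → p x)} = 0 := ae_iff.1 ((ae_restrict_iff' hU.measurableSet).1 hp)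
  refine (hV.inter hU).measure_ne_zero μ ⟨x, hxV, hxU⟩ (measure_mono_null ?_ hnull)
  exact fun y ⟨hyV, hyU⟩ hpy => hempty ⟨y, hyV, hyU, hpy hyU⟩

theorem LipschitzOnWith.exists_lipschitzOnWith_closure_eqOn {α E : Type*} [PseudoMetricSpace α]
    [NormedAddCommGroup E] [NormedSpace ℝ E] [FiniteDimensional ℝ E] {s : Set α} {f : α → E}
    {K : ℝ≥0} (hf : LipschitzOnWith K f s) :
    ∃ g : α → E, LipschitzOnWith K g (closure s) ∧ EqOn f g s := by
  obtain ⟨g, hg, hfg⟩ := hf.extend_finite_dimension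
  have hgs : LipschitzOnWith K g s := fun x hx y hy => by
    simpa only [hfg hx, hfg hy] using hf hx hy
  exact ⟨g, hgs.closure hg.continuous.continuousOn, hfg⟩

theorem ae_limit_of_almost_lipschitz_is_lipschitz_general
    (a b : ℝ) (n : ℕ)
    (C : ℝ) (hC : 0 ≤ C)
    (ε : ℕ → ℝ)
    (hε0 : Filter.Tendsto ε Filter.atTop (nhds 0))
    (f : ℕ → ℝ → EuclideanSpace ℝ (Fin n))
    (flim : ℝ → EuclideanSpace ℝ (Fin n))
    (hinc : ∀ h, ∀ t₁ ∈ Set.Ioo a b, ∀ t₂ ∈ Set.Ioo a b, t₁ ≤ t₂ →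
      ‖f h t₂ - f h t₁‖ ≤ C * (t₂ - t₁ + ε h))
    (hconv : ∀ᵐ s ∂(MeasureTheory.volume.restrict (Set.Ioo a b)),
      Filter.Tendsto (fun h => f h s) Filter.atTop (nhds (flim s))) :
    ∃ g : ℝ → EuclideanSpace ℝ (Fin n),
      LipschitzOnWith (Real.toNNReal C) g (Set.Ioo a b) ∧
      ∀ᵐ s ∂(MeasureTheory.volume.restrict (Set.Ioo a b)), g s = flim s := by
  set E := {s | s ∈ Ioo a b ∧ Tendsto (fun h => f h s) atTop (𝓝 (flim s))}
  have hdist : ∀ h, ∀ x ∈ E, ∀ y ∈ E, dist (f h x) (f h y) ≤ C.toNNReal * (dist x y + ε h) :=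
    fun h x hx y hy => by
      rw [Real.coe_toNNReal C hC]
      exact dist_le_mul_of_forall_le_norm_sub_le (hinc h) x hx.1 y hy.1
  have hlip : LipschitzOnWith C.toNNReal flim E :=
    .of_tendsto_of_dist_le hε0 hdist fun x hx => hx.2
  obtain ⟨g, hg, hfg⟩ := hlip.exists_lipschitzOnWith_closure_eqOn
  refine ⟨g, hg.mono (subset_closure_setOf_of_ae_restrict isOpen_Ioo hconv), ?_⟩
  filter_upwards [hconv, ae_restrict_mem measurableSet_Ioo] with s hs hsI
  exact (hfg ⟨hsI, hs⟩).symm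

/-- If a sequence of functions on a bounded interval satisfies a uniform almost-Lipschitz
increment bound with vanishing defect and converges pointwise a.e., then the a.e. limit
coincides a.e. with a Lipschitz function. -/
theorem ae_limit_of_almost_lipschitz_is_lipschitz
    (a b : ℝ) (hab : a < b) (n : ℕ) (hn : 1 ≤ n)
    (C : ℝ) (hC : 0 ≤ C)
    (ε : ℕ → ℝ) (hε : ∀ h, 0 ≤ ε h)
    (hε0 : Filter.Tendsto ε Filter.atTop (nhds 0))
    (f : ℕ → ℝ → EuclideanSpace ℝ (Fin n))
    (flim : ℝ → EuclideanSpace ℝ (Fin n))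
    (hinc : ∀ h, ∀ t₁ ∈ Set.Ioo a b, ∀ t₂ ∈ Set.Ioo a b, t₁ ≤ t₂ →
      ‖f h t₂ - f h t₁‖ ≤ C * (t₂ - t₁ + ε h))
    (hconv : ∀ᵐ s ∂(MeasureTheory.volume.restrict (Set.Ioo a b)),
      Filter.Tendsto (fun h => f h s) Filter.atTop (nhds (flim s))) :
    ∃ g : ℝ → EuclideanSpace ℝ (Fin n),
      LipschitzOnWith (Real.toNNReal C) g (Set.Ioo a b) ∧
      ∀ᵐ s ∂(MeasureTheory.volume.restrict (Set.Ioo a b)), g s = flim s :=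
  ae_limit_of_almost_lipschitz_is_lipschitz_general a b n C hC ε hε0 f flim hinc hconv
end
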